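/- (Theorem 3.1, monotonicity.) Fix real parameters β and Ω, let D ⊆ ℝ be a set of nonnegative reals, and let A be a set of differentiable functions ψ : ℝ² → ℂ such that for every ψ ∈ A all five integrands in the Gross–Pitaevskii energy (the kinetic term, the terms x₁²|ψ|²/2 and x₂²|ψ|²/2, the interaction term, and Re(conj(ψ)·L_zψ)) are integrable. Assume that for every γ ∈ D there exists a ground state ψ^γ ∈ A with ‖ψ^γ‖₂ = 1 and E_γ(ψ^γ) ≤ E_γ(φ) for every φ ∈ A with ‖φ‖₂ = 1, and define ℰ(γ) = E_γ(ψ^γ). Then ℰ is strictly increasing on D: for all γ, γ₁ ∈ D with γ < γ₁ one has ℰ(γ) < ℰ(γ₁). -/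
import Mathlib


open MeasureTheory

/-- First partial derivative of `ψ` (in the `x₁` direction). -/
noncomputable def dpsi1 (ψ : ℝ × ℝ → ℂ) (x : ℝ × ℝ) : ℂ := fderiv ℝ ψ x (1, 0)

/-- Second partial derivative of `ψ` (in the `x₂` direction). -/
noncomputable def dpsi2 (ψ : ℝ × ℝ → ℂ) (x : ℝ × ℝ) : ℂ := fderiv ℝ ψ x (0, 1)

/-- Angular momentum operator `L_z ψ = -i (x₁ ∂ψ/∂x₂ - x₂ ∂ψ/∂x₁)`. -/
noncomputable def Lz (ψ : ℝ × ℝ → ℂ) (x : ℝ × ℝ) : ℂ :=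
  -Complex.I * ((x.1 : ℂ) * dpsi2 ψ x - (x.2 : ℂ) * dpsi1 ψ x)

/-- Kinetic density `‖∇ψ(x)‖²`. -/
noncomputable def kinetic (ψ : ℝ × ℝ → ℂ) (x : ℝ × ℝ) : ℝ :=
  ‖dpsi1 ψ x‖ ^ 2 + ‖dpsi2 ψ x‖ ^ 2

/-- Rotation density `Re(conj(ψ(x)) · (L_z ψ)(x))`. -/
noncomputable def rotTerm (ψ : ℝ × ℝ → ℂ) (x : ℝ × ℝ) : ℝ :=
  (starRingEnd ℂ (ψ x) * Lz ψ x).re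

/-- Gross–Pitaevskii energy with interaction strength `β`, rotation speed `Ω`
and trapping anisotropy `γ`. -/
noncomputable def GPenergy (β Ω γ : ℝ) (ψ : ℝ × ℝ → ℂ) : ℝ :=
  ∫ x : ℝ × ℝ, ((1 / 2) * kinetic ψ x + ((x.1 ^ 2 + γ * x.2 ^ 2) / 2) * ‖ψ x‖ ^ 2
    + (β / 2) * ‖ψ x‖ ^ 4 - Ω * rotTerm ψ x)

/-- `B(ψ) = ∫ (x₂²/2) |ψ(x)|² dx`. -/
noncomputable def Bfun (ψ : ℝ × ℝ → ℂ) : ℝ :=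
  ∫ x : ℝ × ℝ, (x.2 ^ 2 / 2) * ‖ψ x‖ ^ 2


lemma GP_decomp (β Ω γ : ℝ) (ψ : (ℝ × ℝ) → ℂ)
    (h1 : Integrable (fun x : ℝ × ℝ => (1 / 2) * kinetic ψ x))
    (h2 : Integrable (fun x : ℝ × ℝ => (x.1 ^ 2 / 2) * ‖ψ x‖ ^ 2))
    (h3 : Integrable (fun x : ℝ × ℝ => (x.2 ^ 2 / 2) * ‖ψ x‖ ^ 2))
    (h4 : Integrable (fun x : ℝ × ℝ => ‖ψ x‖ ^ 4))
    (h5 : Integrable (fun x : ℝ × ℝ => rotTerm ψ x)) :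
    GPenergy β Ω γ ψ =
      (∫ x : ℝ × ℝ, ((1 / 2) * kinetic ψ x + (x.1 ^ 2 / 2) * ‖ψ x‖ ^ 2
          + (β / 2) * ‖ψ x‖ ^ 4 - Ω * rotTerm ψ x)) + γ * Bfun ψ := by
  have hbase : Integrable (fun x : ℝ × ℝ => (1 / 2) * kinetic ψ x
      + (x.1 ^ 2 / 2) * ‖ψ x‖ ^ 2 + (β / 2) * ‖ψ x‖ ^ 4 - Ω * rotTerm ψ x) :=
    ((h1.add h2).add (h4.const_mul (β / 2))).sub (h5.const_mul Ω)
  have hB : Integrable (fun x : ℝ × ℝ => γ * ((x.2 ^ 2 / 2) * ‖ψ x‖ ^ 2)) :=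
    h3.const_mul γ
  have : GPenergy β Ω γ ψ = ∫ x : ℝ × ℝ, (((1 / 2) * kinetic ψ x
      + (x.1 ^ 2 / 2) * ‖ψ x‖ ^ 2 + (β / 2) * ‖ψ x‖ ^ 4 - Ω * rotTerm ψ x)
      + γ * ((x.2 ^ 2 / 2) * ‖ψ x‖ ^ 2)) := by
    unfold GPenergy
    congr 1
    funext x
    ring
  rw [this, integral_add hbase hB, integral_const_mul]
  rfl

lemma Bfun_pos (ψ : (ℝ × ℝ) → ℂ)
    (h3 : Integrable (fun x : ℝ × ℝ => (x.2 ^ 2 / 2) * ‖ψ x‖ ^ 2))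
    (hmass : (∫ x : ℝ × ℝ, ‖ψ x‖ ^ 2) = 1) : 0 < Bfun ψ := by
  have hnonneg : ∀ x : ℝ × ℝ, 0 ≤ (x.2 ^ 2 / 2) * ‖ψ x‖ ^ 2 := fun x =>
    mul_nonneg (by positivity) (by positivity)
  rcases lt_or_ge 0 (Bfun ψ) with h | h
  · exact h
  exfalso
  have hzero : Bfun ψ = 0 :=
    le_antisymm h (integral_nonneg hnonneg)
  have hae : (fun x : ℝ × ℝ => (x.2 ^ 2 / 2) * ‖ψ x‖ ^ 2) =ᵐ[volume] 0 := by
    rw [← integral_eq_zero_iff_of_nonneg hnonneg h3]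
    exact hzero
  -- the line {x.2 = 0} is null
  have hline : volume {x : ℝ × ℝ | x.2 = 0} = 0 := by
    have : {x : ℝ × ℝ | x.2 = 0} = (Set.univ : Set ℝ) ×ˢ ({0} : Set ℝ) := by
      ext x
      simp only [Set.mem_setOf_eq, Set.mem_prod, Set.mem_univ, Set.mem_singleton_iff, true_and]
    rw [this]
    rw [show (volume : Measure (ℝ × ℝ)) = (volume : Measure ℝ).prod volume from rfl]
    rw [Measure.prod_prod]
    simp
  have hψae : (fun x : ℝ × ℝ => ‖ψ x‖ ^ 2) =ᵐ[volume] 0 := by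
    have hne : ∀ᵐ x : ℝ × ℝ ∂volume, x.2 ≠ 0 := by
      rw [ae_iff]
      convert hline using 2
      ext x; simp
    filter_upwards [hae, hne] with x hx hx2
    have : (x.2 ^ 2 / 2) * ‖ψ x‖ ^ 2 = 0 := hx
    have h2 : x.2 ^ 2 / 2 ≠ 0 := by positivity
    simpa [h2] using this
  have : (∫ x : ℝ × ℝ, ‖ψ x‖ ^ 2) = 0 := by
    rw [integral_congr_ae hψae]; simp
  rw [hmass] at this
  norm_num at this

/-- Theorem 3.1 (monotonicity): the ground-state energy `ℰ(γ) = E_γ(ψ^γ)` is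
strictly increasing on a set `D` of nonnegative parameters. -/
theorem groundStateEnergy_strictMono (β Ω : ℝ) (D : Set ℝ)
    (hD : ∀ γ ∈ D, 0 ≤ γ)
    (A : Set ((ℝ × ℝ) → ℂ))
    (hA : ∀ ψ ∈ A, Differentiable ℝ ψ ∧
      Integrable (fun x : ℝ × ℝ => (1 / 2) * kinetic ψ x) ∧
      Integrable (fun x : ℝ × ℝ => (x.1 ^ 2 / 2) * ‖ψ x‖ ^ 2) ∧
      Integrable (fun x : ℝ × ℝ => (x.2 ^ 2 / 2) * ‖ψ x‖ ^ 2) ∧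
      Integrable (fun x : ℝ × ℝ => ‖ψ x‖ ^ 4) ∧
      Integrable (fun x : ℝ × ℝ => rotTerm ψ x))
    (gs : ℝ → (ℝ × ℝ) → ℂ)
    (hmem : ∀ γ ∈ D, gs γ ∈ A)
    (hmass : ∀ γ ∈ D, (∫ x : ℝ × ℝ, ‖gs γ x‖ ^ 2) = 1)
    (hmin : ∀ γ ∈ D, ∀ φ ∈ A, (∫ x : ℝ × ℝ, ‖φ x‖ ^ 2) = 1 →
      GPenergy β Ω γ (gs γ) ≤ GPenergy β Ω γ φ) :
    ∀ γ ∈ D, ∀ γ₁ ∈ D, γ < γ₁ →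
      GPenergy β Ω γ (gs γ) < GPenergy β Ω γ₁ (gs γ₁) := by
  intro γ hγ γ₁ hγ₁ hlt
  obtain ⟨hdiff, h1, h2, h3, h4, h5⟩ := hA (gs γ₁) (hmem γ₁ hγ₁)
  have hBpos : 0 < Bfun (gs γ₁) := Bfun_pos (gs γ₁) h3 (hmass γ₁ hγ₁)
  have hstep : GPenergy β Ω γ (gs γ₁) < GPenergy β Ω γ₁ (gs γ₁) := by
    rw [GP_decomp β Ω γ (gs γ₁) h1 h2 h3 h4 h5,
        GP_decomp β Ω γ₁ (gs γ₁) h1 h2 h3 h4 h5]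
    have := mul_lt_mul_of_pos_right hlt hBpos
    linarith
  exact lt_of_le_of_lt
    (hmin γ hγ (gs γ₁) (hmem γ₁ hγ₁) (hmass γ₁ hγ₁)) hstep
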